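/- arXiv:0801.3691 — 6 statements merged into one kernel-verified Lean document; each statement's English description precedes it below -/
import Mathlib

section
/- As x → 0 from the right, arsinh(1/sinh(x/2)) = −log x + 2·log 2 + O(x²); precisely, the function x ↦ Real.arsinh (1 / Real.sinh (x/2)) − (−Real.log x + 2·Real.log 2) is big-O of x ↦ x² along the filter nhdsWithin 0 (Set.Ioi 0) on ℝ. -/
/-!
With `t = x / 4`, the doubling formulas give `arsinh (1 / sinh (2 t)) = log (cosh t / sinh t)`,
so the difference to be estimated is `log (t cosh t / sinh t)`. This lies between `0` and `t² / 2`: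
`sinh t ≤ t cosh t` by the mean value theorem, while `t ≤ sinh t` and `cosh t ≤ exp (t² / 2)`.
-/

namespace Real

lemma sinh_le_mul_cosh {t : ℝ} (ht : 0 ≤ t) : sinh t ≤ t * cosh t := by
  have hderiv : ∀ s ∈ interior (Set.Icc 0 t), deriv sinh s ≤ cosh t := by
    intro s hs
    rw [interior_Icc] at hs
    rw [deriv_sinh, cosh_le_cosh, abs_of_pos hs.1, abs_of_nonneg ht]
    exact hs.2.le
  have := (convex_Icc 0 t).image_sub_le_mul_sub_of_deriv_le continuous_sinh.continuousOn
    differentiable_sinh.differentiableOn hderiv 0 (Set.left_mem_Icc.2 ht) t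
    (Set.right_mem_Icc.2 ht) ht
  simpa [mul_comm] using this

lemma log_mul_cosh_div_sinh_nonneg {t : ℝ} (ht : 0 < t) : 0 ≤ log (t * cosh t / sinh t) :=
  log_nonneg <| (one_le_div (sinh_pos_iff.2 ht)).2 (sinh_le_mul_cosh ht.le)

lemma log_mul_cosh_div_sinh_le {t : ℝ} (ht : 0 < t) : log (t * cosh t / sinh t) ≤ t ^ 2 / 2 := by
  have hsinh : 0 < sinh t := sinh_pos_iff.2 ht
  calc log (t * cosh t / sinh t) ≤ log (cosh t) := by
        refine log_le_log (by positivity) ?_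
        rw [div_le_iff₀ hsinh, mul_comm]
        exact mul_le_mul_of_nonneg_left (self_le_sinh_iff.2 ht.le) (cosh_pos t).le
    _ ≤ t ^ 2 / 2 := (log_le_iff_le_exp (cosh_pos t)).2 (cosh_le_exp_half_sq t)

lemma arsinh_one_div_sinh_two_mul {t : ℝ} (ht : 0 < t) :
    arsinh (1 / sinh (2 * t)) = log (cosh t / sinh t) := by
  have hsinh : 0 < sinh t := sinh_pos_iff.2 ht
  rw [← arsinh_sinh (log (cosh t / sinh t)), sinh_log (by positivity), sinh_two_mul]
  congr 1
  field_simp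
  exact (cosh_sq_sub_sinh_sq t).symm

end Real

open Asymptotics Real

/-- As `x → 0⁺`, `arsinh (1 / sinh (x/2)) = -log x + 2 log 2 + O(x²)`. -/
theorem arsinh_one_div_sinh_asymptotic :
    (fun x : ℝ => Real.arsinh (1 / Real.sinh (x / 2)) - (-Real.log x + 2 * Real.log 2))
      =O[nhdsWithin 0 (Set.Ioi 0)] fun x : ℝ => x ^ 2 := by
  refine isBigO_iff.2 ⟨1 / 32, ?_⟩
  filter_upwards [self_mem_nhdsWithin] with x (hx : 0 < x)
  have ht : 0 < x / 4 := by positivity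
  have hreduce : arsinh (1 / sinh (x / 2)) - (-log x + 2 * log 2)
      = log (x / 4 * cosh (x / 4) / sinh (x / 4)) := by
    rw [show x / 2 = 2 * (x / 4) by ring, arsinh_one_div_sinh_two_mul ht, mul_div_assoc,
      log_mul ht.ne' (by positivity), log_div hx.ne' four_ne_zero,
      show (4 : ℝ) = 2 ^ 2 by norm_num, log_pow]
    push_cast
    ring
  rw [hreduce, norm_of_nonneg (log_mul_cosh_div_sinh_nonneg ht), norm_of_nonneg (sq_nonneg x)]
  calc _ ≤ (x / 4) ^ 2 / 2 := log_mul_cosh_div_sinh_le ht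
    _ = 1 / 32 * x ^ 2 := by ring
end

section
/- For every w ∈ ℍ with −1/2 ≤ re w ≤ 1/2 and im w ≤ 1, the hyperbolic distance from w to the horocycle segment h satisfies Metric.infDist w h = −Real.log (im w); equivalently, im w = Real.exp (−Metric.infDist w h). -/
open scoped UpperHalfPlane
open UpperHalfPlane

/-- The horocycle segment `h ⊆ ℍ`: points with `-1/2 ≤ re < 1/2` and `im = 1`. -/
def horocycle : Set ℍ := {w : ℍ | -(1 / 2) ≤ w.re ∧ w.re < 1 / 2 ∧ w.im = 1}

/-! `log ∘ im` is 1-Lipschitz for the hyperbolic metric, with equality on vertical geodesics.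
So every point of height `1` is at distance at least `-log (im w)` from `w`, and the point
`re w + i`, which lies in the closure of `h` (it is `1/2 + i` when `re w = 1/2`), attains this
bound. -/

open Metric Set Real

lemma continuous_vadd_I : Continuous fun t : ℝ ↦ t +ᵥ I :=
  isEmbedding_coe.continuous_iff.mpr <| by simp only [Function.comp_def, coe_vadd]; fun_prop

lemma vadd_I_mem_closure_horocycle {t : ℝ} (ht : t ∈ Icc (-(1 / 2)) (1 / 2)) :
    t +ᵥ I ∈ closure horocycle := by
  have himage : (· +ᵥ I) '' Ico (-(1 / 2) : ℝ) (1 / 2) ⊆ horocycle := by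
    rintro _ ⟨s, ⟨hs₁, hs₂⟩, rfl⟩
    exact ⟨by simpa using hs₁, by simpa using hs₂, by simp⟩
  rw [← closure_Ico (by norm_num)] at ht
  exact closure_mono himage (image_closure_subset_closure_image continuous_vadd_I ⟨t, ht, rfl⟩)

lemma dist_log_im_eq_neg_log_im {w v : ℍ} (hw : w.im ≤ 1) (hv : v.im = 1) :
    dist (log w.im) (log v.im) = -log w.im := by
  rw [hv, log_one, Real.dist_eq, sub_zero, abs_of_nonpos (log_nonpos w.im_pos.le hw)]

/-- For `w ∈ ℍ` with `-1/2 ≤ re w ≤ 1/2` and `im w ≤ 1`, the hyperbolic distance from `w`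
to the horocycle segment `h` is `-log (im w)`; equivalently `im w = exp (-infDist w h)`. -/
theorem infDist_horocycle_eq (w : ℍ) (h₁ : -(1 / 2) ≤ w.re) (h₂ : w.re ≤ 1 / 2)
    (h₃ : w.im ≤ 1) :
    Metric.infDist w horocycle = -Real.log w.im ∧
      w.im = Real.exp (-(Metric.infDist w horocycle)) := by
  have hne : horocycle.Nonempty := ⟨I, by norm_num [horocycle]⟩
  have key : infDist w horocycle = -log w.im := by
    refine le_antisymm ?_ ((le_infDist hne).2 fun v hv ↦ ?_)
    · calc infDist w horocycle = infDist w (closure horocycle) := infDist_closure.symm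
        _ ≤ dist w (w.re +ᵥ I) :=
          infDist_le_dist_of_mem (vadd_I_mem_closure_horocycle ⟨h₁, h₂⟩)
        _ = dist (log w.im) (log (w.re +ᵥ I).im) := dist_of_re_eq (by simp)
        _ = -log w.im := dist_log_im_eq_neg_log_im h₃ (by simp)
    · exact dist_log_im_eq_neg_log_im h₃ hv.2.2 ▸ dist_log_im_le w v
  exact ⟨key, by rw [key, neg_neg, exp_log w.im_pos]⟩
end

section
/- For every w ∈ ℍ with −1/2 ≤ re w ≤ 1/2 and every integer n, dist(i, w) ≤ dist(i, w + n), where w + n denotes the point of ℍ with real part re w + n and imaginary part im w, and i ∈ ℍ is the point with re = 0 and im = 1. (That is, among all horizontal integer translates of a point, the one with real part in [−1/2, 1/2] is closest to i.) -/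
open scoped UpperHalfPlane
open UpperHalfPlane

/-!
At equal imaginary parts the hyperbolic distance to `z` is increasing in the Euclidean
distance to `z`, which in turn only depends on the horizontal offset. So it suffices that
`|re w| ≤ |re w + n|`, which holds because `|re w| ≤ 1/2` while `|n| ≥ 1` for `n ≠ 0`.
-/

lemma abs_le_abs_add_intCast {x : ℝ} (hx : |x| ≤ 1 / 2) (n : ℤ) : |x| ≤ |x + n| := by
  rcases eq_or_ne n 0 with rfl | hn
  · simp
  have one_le : (1 : ℝ) ≤ |(n : ℝ)| := by exact_mod_cast Int.one_le_abs hn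
  have reverse_triangle := abs_sub_abs_le_abs_sub (n : ℝ) (-x)
  rw [abs_neg, sub_neg_eq_add, add_comm] at reverse_triangle
  linarith

namespace UpperHalfPlane

lemma dist_le_dist_of_im_eq {z w w' : ℍ} (him : w.im = w'.im)
    (hre : |z.re - w.re| ≤ |z.re - w'.re|) : dist z w ≤ dist z w' := by
  rw [dist_eq, dist_eq, him]
  gcongr
  simp only [Complex.dist_eq_re_im, coe_re, coe_im, him]
  gcongr √(?_ + _)
  exact sq_le_sq.mpr hre

end UpperHalfPlane

/-- Among all horizontal integer translates of a point of `ℍ`, the one with real part in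
`[-1/2, 1/2]` is closest to `i`. -/
theorem dist_I_le_dist_I_int_vadd (w : ℍ) (h₁ : -(1 / 2) ≤ w.re) (h₂ : w.re ≤ 1 / 2)
    (n : ℤ) :
    dist UpperHalfPlane.I w ≤ dist UpperHalfPlane.I ((n : ℝ) +ᵥ w) := by
  refine dist_le_dist_of_im_eq (vadd_im _ _).symm ?_
  rw [I_re, vadd_re, zero_sub, zero_sub, abs_neg, abs_neg, add_comm]
  exact abs_le_abs_add_intCast (abs_le.mpr ⟨h₁, h₂⟩) n
end

section
/- (Hyperbolic ball packing.) Let z ∈ ℍ, ε > 0, R > 0, and let F be a finite set of points of ℍ such that the open hyperbolic balls Metric.ball p ε, for p ∈ F, are pairwise disjoint and each contained in Metric.ball z R. Then (Finset.card F) · (Real.sinh (ε/2))² ≤ (Real.sinh (R/2))². -/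
/-!
The hyperbolic area `dx dy / y²` of a ball of radius `r` in `ℍ` is `4π sinh²(r/2)` whatever its
centre, so the disjoint small balls inside the big one give the bound by comparing areas.
The area does not depend on the centre because `SL(2, ℝ)` acts transitively by isometries
preserving the measure. About `i`, the Cayley transform `u ↦ i(1 + u)/(1 - u)` maps the Euclidean
disc of radius `tanh(r/2)` onto the ball and pulls the area form back to `4 |du|² / (1 - |u|²)²`,
which is integrated in polar coordinates.
-/

open scoped UpperHalfPlane
open UpperHalfPlane
open MeasureTheory Metric Set Real
open scoped ENNReal NNReal MatrixGroups Pointwise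

lemma Real.strictMono_tanh : StrictMono tanh := fun a b hab => by
  by_contra! h
  have := artanh_le_artanh (neg_one_lt_tanh b) (tanh_lt_one a) h
  rw [artanh_tanh, artanh_tanh] at this
  linarith

lemma Real.tanh_sq_div_one_sub_tanh_sq (x : ℝ) : tanh x ^ 2 / (1 - tanh x ^ 2) = sinh x ^ 2 := by
  have hc : cosh x ≠ 0 := (cosh_pos x).ne'
  rw [tanh_eq_sinh_div_cosh]
  field_simp
  rw [cosh_sq_sub_sinh_sq, mul_one]

lemma integral_mul_four_div_one_sub_sq_sq {t : ℝ} (ht0 : 0 ≤ t) (ht : t < 1) :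
    ∫ ρ in 0..t, ρ * (4 / (1 - ρ ^ 2) ^ 2) = 2 * t ^ 2 / (1 - t ^ 2) := by
  have hpos : ∀ ρ ∈ uIcc 0 t, 1 - ρ ^ 2 ≠ 0 := fun ρ hρ => by
    rw [uIcc_of_le ht0] at hρ
    nlinarith [hρ.1, hρ.2]
  have hderiv : ∀ ρ ∈ uIcc 0 t,
      HasDerivAt (fun ρ => 2 * (1 - ρ ^ 2)⁻¹) (ρ * (4 / (1 - ρ ^ 2) ^ 2)) ρ := by
    intro ρ hρ
    refine ((((hasDerivAt_pow 2 ρ).const_sub 1).inv (hpos ρ hρ)).const_mul 2).congr_deriv ?_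
    field_simp
    ring
  have hcont : ContinuousOn (fun ρ : ℝ => ρ * (4 / (1 - ρ ^ 2) ^ 2)) (uIcc 0 t) :=
    continuousOn_id.mul <|
      continuousOn_const.div (by fun_prop) fun ρ hρ => pow_ne_zero 2 (hpos ρ hρ)
  rw [intervalIntegral.integral_eq_sub_of_hasDerivAt hderiv hcont.intervalIntegrable]
  have : 1 - t ^ 2 ≠ 0 := hpos t right_mem_uIcc
  field_simp
  ring

lemma Complex.setIntegral_ball_fun_norm {F : Type*} [NormedAddCommGroup F] [NormedSpace ℝ F]
    (f : ℝ → F) {t : ℝ} (ht : 0 ≤ t) :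
    ∫ u in ball (0 : ℂ) t, f ‖u‖ = (2 * π) • ∫ ρ in 0..t, ρ • f ρ := by
  have hball : ∀ u : ℂ,
      (ball (0 : ℂ) t).indicator (fun u => f ‖u‖) u = (Iio t).indicator f ‖u‖ := fun u => by
    simp [indicator]
  have hIoi : ∀ ρ ∈ Ioi (0 : ℝ), ρ ^ (Module.finrank ℝ ℂ - 1) • (Iio t).indicator f ρ =
      (Ioo 0 t).indicator (fun ρ => ρ • f ρ) ρ := fun ρ hρ => by
    by_cases h : ρ < t <;> simp [indicator, h, hρ.out]
  rw [← integral_indicator measurableSet_ball, funext hball, integral_fun_norm_addHaar,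
    setIntegral_congr_fun measurableSet_Ioi hIoi, setIntegral_indicator measurableSet_Ioo,
    inter_eq_right.mpr Ioo_subset_Ioi_self, Measure.restrict_congr_set Ioo_ae_eq_Ioc,
    ← intervalIntegral.integral_of_le ht]
  simp [Measure.real, Complex.volume_ball, mul_smul, ofNat_smul_eq_nsmul]

lemma Complex.det_restrictScalars_toSpanSingleton (c : ℂ) :
    ((ContinuousLinearMap.toSpanSingleton ℂ c).restrictScalars ℝ).det = ‖c‖ ^ 2 := by
  simp [ContinuousLinearMap.det, LinearMap.det_restrictScalars, Algebra.norm_complex_apply,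
    Complex.normSq_eq_norm_sq]

lemma Complex.lintegral_image_eq_lintegral_norm_deriv_sq_mul {s : Set ℂ} (hs : MeasurableSet s)
    {f f' : ℂ → ℂ} (hf' : ∀ x ∈ s, HasDerivWithinAt f (f' x) s x) (hf : InjOn f s)
    (g : ℂ → ℝ≥0∞) :
    ∫⁻ x in f '' s, g x = ∫⁻ x in s, ENNReal.ofReal (‖f' x‖ ^ 2) * g (f x) := by
  rw [lintegral_image_eq_lintegral_abs_det_fderiv_mul volume hs
    (fun x hx => (hf' x hx).hasFDerivWithinAt.restrictScalars ℝ) hf]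
  simp only [det_restrictScalars_toSpanSingleton, abs_pow, abs_norm]

lemma lintegral_ball_four_div_one_sub_norm_sq_sq {t : ℝ} (ht0 : 0 ≤ t) (ht : t < 1) :
    ∫⁻ u in ball (0 : ℂ) t, ENNReal.ofReal (4 / (1 - ‖u‖ ^ 2) ^ 2) =
      ENNReal.ofReal (4 * π * (t ^ 2 / (1 - t ^ 2))) := by
  have hpos : ∀ u ∈ closedBall (0 : ℂ) t, (1 - ‖u‖ ^ 2) ^ 2 ≠ 0 := fun u hu => by
    rw [mem_closedBall_zero_iff] at hu
    have : ‖u‖ ^ 2 < 1 := by nlinarith [norm_nonneg u]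
    positivity
  have hint : IntegrableOn (fun u : ℂ => 4 / (1 - ‖u‖ ^ 2) ^ 2) (ball 0 t) :=
    ((continuousOn_const.div (by fun_prop) hpos).integrableOn_compact
      (isCompact_closedBall 0 t)).mono_set ball_subset_closedBall
  rw [← ofReal_integral_eq_lintegral_ofReal hint (.of_forall fun u => by positivity),
    Complex.setIntegral_ball_fun_norm (fun ρ => 4 / (1 - ρ ^ 2) ^ 2) ht0]
  simp only [smul_eq_mul]
  rw [integral_mul_four_div_one_sub_sq_sq ht0 ht]
  ring_nf

namespace UpperHalfPlane

noncomputable def cayley (u : ℂ) : ℂ := Complex.I * (1 + u) / (1 - u)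

lemma cayley_im (u : ℂ) : (cayley u).im = (1 - ‖u‖ ^ 2) / ‖1 - u‖ ^ 2 := by
  simp only [cayley, Complex.div_im, Complex.mul_re, Complex.mul_im, Complex.I_re, Complex.I_im,
    Complex.add_re, Complex.add_im, Complex.sub_re, Complex.sub_im, Complex.one_re, Complex.one_im,
    ← Complex.normSq_eq_norm_sq, Complex.normSq_apply]
  ring

lemma hasDerivAt_cayley {u : ℂ} (hu : u ≠ 1) :
    HasDerivAt cayley (2 * Complex.I / (1 - u) ^ 2) u := by
  have hu' : 1 - u ≠ 0 := sub_ne_zero.mpr hu.symm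
  refine ((((hasDerivAt_id u).const_add 1).const_mul Complex.I).div
    ((hasDerivAt_id u).const_sub 1) hu').congr_deriv ?_
  simp only [id]
  field_simp
  ring

lemma cayley_sub_div_add {w : ℂ} (hw : w + Complex.I ≠ 0) :
    cayley ((w - Complex.I) / (w + Complex.I)) = w := by
  simp only [cayley]
  field_simp
  ring

lemma sub_div_add_cayley {u : ℂ} (hu : u ≠ 1) :
    (cayley u - Complex.I) / (cayley u + Complex.I) = u := by
  have hu' : 1 - u ≠ 0 := sub_ne_zero.mpr hu.symm
  simp only [cayley]
  field_simp
  ring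

lemma tanh_half_dist_I (z : ℍ) :
    tanh (dist z I / 2) = ‖((z : ℂ) - Complex.I) / (z + Complex.I)‖ := by
  rw [tanh_half_dist, coe_I, Complex.conj_I, norm_div, dist_eq_norm, dist_eq_norm, sub_neg_eq_add]

lemma cayley_im_pos {u : ℂ} (hu : ‖u‖ < 1) : 0 < (cayley u).im := by
  have hu1 : u ≠ 1 := by rintro rfl; simp at hu
  rw [cayley_im]
  exact div_pos (by nlinarith [norm_nonneg u])
    (pow_pos (norm_pos_iff.mpr (sub_ne_zero.mpr hu1.symm)) 2)

lemma image_coe_ball_I (r : ℝ) :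
    ((↑) : ℍ → ℂ) '' ball I r = cayley '' ball 0 (tanh (r / 2)) := by
  ext w
  constructor
  · rintro ⟨z, hz, rfl⟩
    have hzI : (z : ℂ) + Complex.I ≠ 0 := fun h => by
      have := congrArg Complex.im h
      simp at this
      linarith [z.im_pos]
    refine ⟨_, ?_, cayley_sub_div_add hzI⟩
    rw [mem_ball_zero_iff, ← tanh_half_dist_I]
    exact strictMono_tanh (by linarith [mem_ball.mp hz])
  · rintro ⟨u, hu, rfl⟩
    have hu1 : ‖u‖ < 1 := (mem_ball_zero_iff.mp hu).trans (tanh_lt_one _)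
    refine ⟨⟨cayley u, cayley_im_pos hu1⟩, ?_, rfl⟩
    have hdist := tanh_half_dist_I ⟨cayley u, cayley_im_pos hu1⟩
    rw [coe_mk, sub_div_add_cayley (by rintro rfl; simp at hu1)] at hdist
    rw [mem_ball]
    have := strictMono_tanh.lt_iff_lt.mp (hdist.trans_lt (mem_ball_zero_iff.mp hu))
    linarith

lemma norm_sq_deriv_cayley_mul_inv_im_sq {u : ℂ} (hu : u ≠ 1) :
    ‖2 * Complex.I / (1 - u) ^ 2‖ ^ 2 * ((cayley u).im ^ 2)⁻¹ = 4 / (1 - ‖u‖ ^ 2) ^ 2 := by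
  have : ‖1 - u‖ ≠ 0 := norm_ne_zero_iff.mpr (sub_ne_zero.mpr hu.symm)
  rw [cayley_im]
  simp only [norm_div, norm_mul, norm_pow, Complex.norm_I, Complex.norm_ofNat]
  field_simp
  ring

lemma volume_ball_I {r : ℝ} (hr : 0 ≤ r) :
    volume (ball I r) = ENNReal.ofReal (4 * π * sinh (r / 2) ^ 2) := by
  have ht0 : 0 ≤ tanh (r / 2) := by
    simpa using strictMono_tanh.monotone (by linarith : 0 ≤ r / 2)
  have hne : ∀ u ∈ ball (0 : ℂ) (tanh (r / 2)), u ≠ 1 := fun u hu => by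
    rintro rfl
    simpa using (mem_ball_zero_iff.mp hu).trans (tanh_lt_one _)
  have hinj : InjOn cayley (ball 0 (tanh (r / 2))) := fun a ha b hb h => by
    rw [← sub_div_add_cayley (hne a ha), h, sub_div_add_cayley (hne b hb)]
  have hdensity : ∀ u ∈ ball (0 : ℂ) (tanh (r / 2)),
      ENNReal.ofReal (‖2 * Complex.I / (1 - u) ^ 2‖ ^ 2) *
          ↑((1 / ‖(cayley u).im‖₊) ^ 2 : ℝ≥0) = ENNReal.ofReal (4 / (1 - ‖u‖ ^ 2) ^ 2) := by
    intro u hu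
    rw [← norm_sq_deriv_cayley_mul_inv_im_sq (hne u hu), ← ENNReal.ofReal_coe_nnreal,
      ← ENNReal.ofReal_mul (by positivity)]
    congr 2
    push_cast
    rw [Real.norm_eq_abs, one_div, inv_pow, sq_abs]
  rw [volume_eq_lintegral, image_coe_ball_I, Complex.lintegral_image_eq_lintegral_norm_deriv_sq_mul
    measurableSet_ball (fun u hu => (hasDerivAt_cayley (hne u hu)).hasDerivWithinAt) hinj,
    setLIntegral_congr_fun measurableSet_ball hdensity,
    lintegral_ball_four_div_one_sub_norm_sq_sq ht0 (tanh_lt_one _), tanh_sq_div_one_sub_tanh_sq]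

instance : SMulInvariantMeasure SL(2, ℝ) ℍ volume :=
  ⟨fun g _ hs => SMulInvariantMeasure.measure_preimage_smul
    (Matrix.SpecialLinearGroup.mapGL ℝ g : GL (Fin 2) ℝ) hs⟩

lemma volume_ball {r : ℝ} (z : ℍ) (hr : 0 ≤ r) :
    volume (ball z r) = ENNReal.ofReal (4 * π * sinh (r / 2) ^ 2) := by
  obtain ⟨g, rfl⟩ := MulAction.exists_smul_eq SL(2, ℝ) I z
  rw [← Metric.smul_ball, measure_smul, volume_ball_I hr]

end UpperHalfPlane

/-- Hyperbolic ball packing in `ℍ`: if finitely many pairwise disjoint open hyperbolic balls of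
radius `ε` are contained in a ball of radius `R`, then
`(number of balls) · sinh²(ε/2) ≤ sinh²(R/2)`. -/
theorem card_mul_sinh_sq_le_sinh_sq (z : ℍ) (ε R : ℝ) (hε : 0 < ε) (hR : 0 < R)
    (F : Finset ℍ)
    (hdisj : (F : Set ℍ).Pairwise fun p q => Disjoint (Metric.ball p ε) (Metric.ball q ε))
    (hsub : ∀ p ∈ F, Metric.ball p ε ⊆ Metric.ball z R) :
    (F.card : ℝ) * Real.sinh (ε / 2) ^ 2 ≤ Real.sinh (R / 2) ^ 2 := by
  have hvol : ENNReal.ofReal (F.card * (4 * π * sinh (ε / 2) ^ 2)) ≤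
      ENNReal.ofReal (4 * π * sinh (R / 2) ^ 2) :=
    calc ENNReal.ofReal (F.card * (4 * π * sinh (ε / 2) ^ 2))
        = ∑ p ∈ F, volume (ball p ε) := by
          simp [volume_ball _ hε.le, ENNReal.ofReal_mul]
      _ = volume (⋃ p ∈ F, ball p ε) :=
          (measure_biUnion_finset hdisj fun _ _ => measurableSet_ball).symm
      _ ≤ volume (ball z R) := measure_mono (iUnion₂_subset hsub)
      _ = ENNReal.ofReal (4 * π * sinh (R / 2) ^ 2) := volume_ball z hR.le
  have := (ENNReal.ofReal_le_ofReal_iff (by positivity)).mp hvol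
  exact le_of_mul_le_mul_left (by linarith) (by positivity : 0 < 4 * π)
end

section
/- (Proposition 2.2, part 1.) For every z ∈ ℍ and every t ≥ 0 one has the inclusions of sets of cosets A(z,t) ⊆ A(h,z,t) ⊆ A(z,t+1). In particular, whenever these sets are finite, Π(z,t) ≤ Π(h,z,t) ≤ Π(z,t+1). -/
open scoped UpperHalfPlane MatrixGroups
open UpperHalfPlane

noncomputable section

/-- The parabolic element `T = [[1,1],[0,1]]` of `SL(2,ℝ)`, acting on `ℍ` by `z ↦ z + 1`. -/
def T : SL(2, ℝ) := ⟨!![1, 1; 0, 1], by norm_num [Matrix.det_fin_two_of]⟩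

variable (Γ : Subgroup SL(2, ℝ))

/-- The cyclic subgroup `Γ∞` of `Γ` generated by `T`. -/
abbrev GammaInf (hT : T ∈ Γ) : Subgroup Γ := Subgroup.zpowers ⟨T, hT⟩

/-- The set of right cosets `Γ∞\Γ`. -/
abbrev Cosets (hT : T ∈ Γ) := Quotient (QuotientGroup.rightRel (GammaInf Γ hT))

variable (hT : T ∈ Γ)

/-- The term `(im (δ·z))^s` of the Eisenstein series attached to a coset `q ∈ Γ∞\Γ`
(`δ` a representative of `q`; the value is independent of the representative). -/
def eisTerm (z : ℍ) (s : ℝ) (q : Cosets Γ hT) : ℝ :=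
  (((Quotient.out q : Γ) : SL(2, ℝ)) • z).im ^ s

/-- The Eisenstein series `E(z,s) = ∑'_{q ∈ Γ∞\Γ} (im (δ·z))^s`. -/
def Eis (z : ℍ) (s : ℝ) : ℝ := ∑' q : Cosets Γ hT, eisTerm Γ hT z s q

/-- `A(z,t)`: the set of cosets `q ∈ Γ∞\Γ` admitting a representative `δ` with
`dist(i, δ·z) ≤ t`. -/
def Aset (z : ℍ) (t : ℝ) : Set (Cosets Γ hT) :=
  {q | ∃ δ : Γ, Quotient.mk (QuotientGroup.rightRel (GammaInf Γ hT)) δ = q ∧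
    dist UpperHalfPlane.I ((δ : SL(2, ℝ)) • z) ≤ t}

/-- `A(h,z,t)`: the set of cosets `q ∈ Γ∞\Γ` admitting a representative `δ` with
`-1/2 ≤ re(δ·z) < 1/2` and `infDist (δ·z) h ≤ t`. -/
def Ahset (z : ℍ) (t : ℝ) : Set (Cosets Γ hT) :=
  {q | ∃ δ : Γ, Quotient.mk (QuotientGroup.rightRel (GammaInf Γ hT)) δ = q ∧
    -(1 / 2) ≤ ((δ : SL(2, ℝ)) • z).re ∧ ((δ : SL(2, ℝ)) • z).re < 1 / 2 ∧
    Metric.infDist ((δ : SL(2, ℝ)) • z) horocycle ≤ t}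


/-! A coset representative can be translated by a power of `T` into the strip
`-1/2 ≤ re < 1/2` without changing its coset or its imaginary part. There it lies on the
vertical geodesic through the point of `h` with the same real part, at distance
`|log im|`, which is at most its distance to `i`. Conversely `i ∈ h` and `diam h ≤ 1`, so
`dist(i, w) ≤ infDist(w, h) + 1`. -/

lemma T_eq_map_modular_T :
    T = Matrix.SpecialLinearGroup.map (algebraMap ℤ ℝ) ModularGroup.T := by
  ext i j
  fin_cases i <;> fin_cases j <;>
    simp [T, ModularGroup.coe_T, Matrix.SpecialLinearGroup.map_apply_coe]

lemma T_zpow_smul (n : ℤ) (w : ℍ) : T ^ n • w = (n : ℝ) +ᵥ w := by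
  rw [T_eq_map_modular_T, ← map_zpow, ← modular_T_zpow_smul]
  rfl

lemma abs_log_im_le_dist_I (w : ℍ) : |Real.log w.im| ≤ dist I w := by
  simpa [Real.dist_eq, abs_sub_comm] using dist_log_im_le I w

lemma infDist_horocycle_le_abs_log_im {w : ℍ} (h₁ : -(1 / 2) ≤ w.re) (h₂ : w.re < 1 / 2) :
    Metric.infDist w horocycle ≤ |Real.log w.im| := by
  let p : ℍ := mk ⟨w.re, 1⟩ one_pos
  have hp : p ∈ horocycle := ⟨h₁, h₂, rfl⟩
  calc Metric.infDist w horocycle ≤ dist w p := Metric.infDist_le_dist_of_mem hp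
    _ = |Real.log w.im| := by
      rw [UpperHalfPlane.dist_of_re_eq (z := w) (w := p) rfl]
      simp [p]

lemma dist_le_one_of_mem_horocycle {p q : ℍ} (hp : p ∈ horocycle) (hq : q ∈ horocycle) :
    dist p q ≤ 1 := by
  obtain ⟨hp₁, hp₂, hp₃⟩ := hp
  obtain ⟨hq₁, hq₂, hq₃⟩ := hq
  have him : (p : ℂ).im = (q : ℂ).im := by simp [hp₃, hq₃]
  rw [dist_le_iff_le_sinh, Complex.dist_of_im_eq him, hp₃, hq₃]
  have hre : dist p.re q.re < 1 := by rw [Real.dist_eq, abs_lt]; constructor <;> linarith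
  have : (1 / 2 : ℝ) ≤ Real.sinh (1 / 2) := Real.self_le_sinh_iff.2 (by norm_num)
  rw [mul_one, Real.sqrt_one, mul_one, coe_re, coe_re]
  linarith

lemma diam_horocycle_le_one : Metric.diam horocycle ≤ 1 :=
  Metric.diam_le_of_forall_dist_le zero_le_one fun _ hp _ hq ↦ dist_le_one_of_mem_horocycle hp hq

lemma isBounded_horocycle : Bornology.IsBounded horocycle :=
  Metric.isBounded_iff.2 ⟨1, fun _ hp _ hq ↦ dist_le_one_of_mem_horocycle hp hq⟩

lemma I_mem_horocycle : I ∈ horocycle := by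
  refine ⟨?_, ?_, I_im⟩ <;> norm_num [I_re]

lemma dist_I_le_infDist_horocycle_add_one (w : ℍ) :
    dist I w ≤ Metric.infDist w horocycle + 1 := by
  rw [dist_comm]
  exact (Metric.dist_le_infDist_add_diam isBounded_horocycle I_mem_horocycle).trans
    (by gcongr; exact diam_horocycle_le_one)

lemma exists_T_zpow_smul_re_mem_Ico (w : ℍ) :
    ∃ n : ℤ, -(1 / 2) ≤ (T ^ n • w).re ∧ (T ^ n • w).re < 1 / 2 := by
  refine ⟨-⌊w.re + 1 / 2⌋, ?_⟩
  rw [T_zpow_smul, vadd_re]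
  push_cast
  constructor <;> linarith [Int.floor_le (w.re + 1 / 2), Int.lt_floor_add_one (w.re + 1 / 2)]

lemma QuotientGroup.mk_rightRel_mul_of_mem {G : Type*} [Group G] {H : Subgroup G} {h : G}
    (hh : h ∈ H) (g : G) :
    Quotient.mk (QuotientGroup.rightRel H) (h * g) = Quotient.mk (QuotientGroup.rightRel H) g :=
  Quotient.sound <| QuotientGroup.rightRel_apply.2 <| by simpa using H.inv_mem hh

lemma Aset_subset_Ahset (z : ℍ) (t : ℝ) : Aset Γ hT z t ⊆ Ahset Γ hT z t := by
  rintro q ⟨δ, rfl, hδ⟩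
  obtain ⟨n, h₁, h₂⟩ := exists_T_zpow_smul_re_mem_Ico ((δ : SL(2, ℝ)) • z)
  have hsmul : (((⟨T, hT⟩ ^ n * δ : Γ) : SL(2, ℝ)) • z) = T ^ n • (δ : SL(2, ℝ)) • z := by
    rw [← mul_smul]
    rfl
  refine ⟨⟨T, hT⟩ ^ n * δ,
    QuotientGroup.mk_rightRel_mul_of_mem (Subgroup.zpow_mem_zpowers _ n) δ, ?_⟩
  rw [hsmul]
  refine ⟨h₁, h₂, ?_⟩
  calc Metric.infDist (T ^ n • (δ : SL(2, ℝ)) • z) horocycle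
      ≤ |Real.log (T ^ n • (δ : SL(2, ℝ)) • z).im| := infDist_horocycle_le_abs_log_im h₁ h₂
    _ = |Real.log ((δ : SL(2, ℝ)) • z).im| := by rw [T_zpow_smul, vadd_im]
    _ ≤ dist I ((δ : SL(2, ℝ)) • z) := abs_log_im_le_dist_I _
    _ ≤ t := hδ

lemma Ahset_subset_Aset_add_one (z : ℍ) (t : ℝ) : Ahset Γ hT z t ⊆ Aset Γ hT z (t + 1) := by
  rintro q ⟨δ, hδq, -, -, hδ⟩
  exact ⟨δ, hδq, (dist_I_le_infDist_horocycle_add_one _).trans (by linarith)⟩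

theorem Aset_subset_Ahset_subset (z : ℍ) (t : ℝ) :
    Aset Γ hT z t ⊆ Ahset Γ hT z t ∧ Ahset Γ hT z t ⊆ Aset Γ hT z (t + 1) ∧
      ((Aset Γ hT z t).Finite → (Ahset Γ hT z t).Finite → (Aset Γ hT z (t + 1)).Finite →
        (Aset Γ hT z t).ncard ≤ (Ahset Γ hT z t).ncard ∧
          (Ahset Γ hT z t).ncard ≤ (Aset Γ hT z (t + 1)).ncard) :=
  ⟨Aset_subset_Ahset Γ hT z t, Ahset_subset_Aset_add_one Γ hT z t, fun _ hAh hA₁ ↦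
    ⟨Set.ncard_le_ncard (Aset_subset_Ahset Γ hT z t) hAh,
      Set.ncard_le_ncard (Ahset_subset_Aset_add_one Γ hT z t) hA₁⟩⟩
end
end

section
/- (Core estimate of Lemma 2.6.) Let s ∈ ℝ with s > 1 and z ∈ ℍ. Assume the function q ↦ (im(δ·z))^s on Γ∞\Γ (δ any representative of q) is summable. Then for every δ₀ ∈ Γ with im(δ₀·z) ≤ 1, one has E(z,s) ≥ Real.exp (−s · Metric.infDist (δ₀·z) h). -/
/-!
The coset of `δ₀` alone contributes `im (δ₀·z) ^ s` to the series of nonnegative terms. Every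
point `p` of the horocycle has `im p = 1`, and hyperbolic distance dominates
`|log im p - log im w|`, so `-log im w ≤ infDist w h`; exponentiating with `s ≥ 0` gives
`im w ^ s ≥ exp (-s · infDist w h)`.
-/

open scoped UpperHalfPlane MatrixGroups
open UpperHalfPlane

noncomputable section

variable (Γ : Subgroup SL(2, ℝ))

variable (hT : T ∈ Γ)

lemma T_eq_map_modularGroup_T :
    T = Matrix.SpecialLinearGroup.map (Int.castRingHom ℝ) ModularGroup.T := by
  ext i j
  fin_cases i <;> fin_cases j <;> simp [T]

lemma im_smul_eq_of_rightRel {z : ℍ} {δ δ' : Γ}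
    (h : QuotientGroup.rightRel (GammaInf Γ hT) δ δ') :
    ((δ' : SL(2, ℝ)) • z).im = ((δ : SL(2, ℝ)) • z).im := by
  obtain ⟨n, hn⟩ := QuotientGroup.rightRel_apply.1 h
  have : δ' = ⟨T, hT⟩ ^ n * δ := mul_inv_eq_iff_eq_mul.1 hn.symm
  rw [this, Subgroup.coe_mul, Subgroup.coe_zpow, mul_smul, T_zpow_smul, vadd_im]

lemma eisTerm_mk (z : ℍ) (s : ℝ) (δ : Γ) :
    eisTerm Γ hT z s (Quotient.mk (QuotientGroup.rightRel (GammaInf Γ hT)) δ) =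
      ((δ : SL(2, ℝ)) • z).im ^ s := by
  rw [eisTerm, im_smul_eq_of_rightRel Γ hT (Quotient.mk_out δ)]

lemma neg_log_im_le_infDist_horocycle (w : ℍ) :
    -Real.log w.im ≤ Metric.infDist w horocycle := by
  refine (Metric.le_infDist ⟨I, by norm_num [horocycle]⟩).2 fun p hp => ?_
  have := dist_log_im_le p w
  rw [hp.2.2, Real.log_one, Real.dist_eq, zero_sub, dist_comm] at this
  exact (le_abs_self _).trans this

lemma exp_neg_mul_infDist_horocycle_le_im_rpow {s : ℝ} (hs : 0 ≤ s) (w : ℍ) :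
    Real.exp (-s * Metric.infDist w horocycle) ≤ w.im ^ s := by
  rw [Real.rpow_def_of_pos w.im_pos, Real.exp_le_exp, neg_mul, ← mul_neg, mul_comm]
  exact mul_le_mul_of_nonneg_right (neg_le.1 (neg_log_im_le_infDist_horocycle w)) hs

theorem eisenstein_lower_bound (s : ℝ) (hs : 1 < s) (z : ℍ)
    (hsum : Summable (eisTerm Γ hT z s)) (δ₀ : Γ) :
    Real.exp (-s * Metric.infDist ((δ₀ : SL(2, ℝ)) • z) horocycle) ≤ Eis Γ hT z s :=
  calc Real.exp (-s * Metric.infDist ((δ₀ : SL(2, ℝ)) • z) horocycle)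
      ≤ ((δ₀ : SL(2, ℝ)) • z).im ^ s := exp_neg_mul_infDist_horocycle_le_im_rpow (by linarith) _
    _ = eisTerm Γ hT z s (Quotient.mk _ δ₀) := (eisTerm_mk Γ hT z s δ₀).symm
    _ ≤ Eis Γ hT z s := hsum.le_tsum _ fun q _ => Real.rpow_nonneg (im_pos _).le _
end
end
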